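/- arXiv:1701.05065 — 6 statements merged into one kernel-verified Lean document; each statement's English description precedes it below -/
import Mathlib

section
/- For every trimming level α ∈ (0,1) and every classifier g, the trimmed classification error satisfies R_α(g) = (R(g) − α)_+ / (1 − α). -/
open MeasureTheory

noncomputable section

/-- The classification error `R(g) = P({(y,x) : g(x) ≠ y})`. -/
def classErr {p : ℕ} (P : Measure (Bool × (Fin p → ℝ))) (g : (Fin p → ℝ) → Bool) : ℝ :=
  (P {z | g z.2 ≠ z.1}).toReal

/-- The set of `α`-trimmed versions of a measure `μ`:
probability measures `ν ≪ μ` with `dν/dμ ≤ 1/(1-α)` `μ`-a.s. -/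
def trimmedSet {Ω : Type*} [MeasurableSpace Ω] (μ : Measure Ω) (α : ℝ) :
    Set (Measure Ω) :=
  {ν | IsProbabilityMeasure ν ∧ ν ≪ μ ∧
    ∀ᵐ z ∂μ, ν.rnDeriv μ z ≤ ENNReal.ofReal (1 / (1 - α))}

/-- The trimmed classification error `R_α(g) = inf_{Q ∈ 𝓡_α(P)} Q(g(x) ≠ y)`. -/
def trimmedErr {p : ℕ} (P : Measure (Bool × (Fin p → ℝ))) (α : ℝ)
    (g : (Fin p → ℝ) → Bool) : ℝ :=
  sInf ((fun Q => (Q {z | g z.2 ≠ z.1}).toReal) '' trimmedSet P α)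

/-!
A trimmed version `ν` of `μ` has density at most `1/(1-α)`, so `ν(Aᶜ) ≤ μ(Aᶜ)/(1-α)` for the
error set `A`, that is `ν(A) ≥ (μ(A) - α)/(1 - α)`. The bound is attained by the density that
takes the maximal value `1/(1-α)` on `Aᶜ` and the constant needed for total mass one on `A`;
when `μ(A) ≤ α` the density `1/μ(Aᶜ)` on `Aᶜ` already puts all the mass outside `A`.
-/

section

variable {Ω : Type*} [MeasurableSpace Ω] {μ ν : Measure Ω} {α : ℝ} {A : Set Ω}

lemma measure_le_of_mem_trimmedSet [SigmaFinite μ] (hν : ν ∈ trimmedSet μ α) (s : Set Ω) :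
    ν s ≤ ENNReal.ofReal (1 / (1 - α)) * μ s := by
  have := hν.1
  rw [← Measure.setLIntegral_rnDeriv hν.2.1 s, ← setLIntegral_const]
  exact lintegral_mono_ae (ae_restrict_of_ae hν.2.2)

lemma max_sub_div_le_measureReal_of_mem_trimmedSet [IsProbabilityMeasure μ] (hα : α < 1)
    (hν : ν ∈ trimmedSet μ α) (hA : MeasurableSet A) :
    max (μ.real A - α) 0 / (1 - α) ≤ ν.real A := by
  have := hν.1
  have h1α : 0 < 1 - α := sub_pos.2 hα
  have hcompl : ν.real Aᶜ ≤ 1 / (1 - α) * μ.real Aᶜ := by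
    have h := ENNReal.toReal_mono (by finiteness) (measure_le_of_mem_trimmedSet hν Aᶜ)
    rwa [ENNReal.toReal_mul, ENNReal.toReal_ofReal (by positivity)] at h
  rw [probReal_compl_eq_one_sub hA, probReal_compl_eq_one_sub hA] at hcompl
  rw [← max_div_div_right h1α.le, zero_div, max_le_iff, div_le_iff₀ h1α]
  constructor
  · rw [div_mul_eq_mul_div, one_mul, le_div_iff₀ h1α] at hcompl
    nlinarith
  · exact measureReal_nonneg

lemma withDensity_mem_trimmedSet [SigmaFinite μ] {f : Ω → ENNReal} (hf : Measurable f)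
    (hf_int : ∫⁻ z, f z ∂μ = 1) (hf_le : ∀ z, f z ≤ ENNReal.ofReal (1 / (1 - α))) :
    μ.withDensity f ∈ trimmedSet μ α := by
  refine ⟨⟨?_⟩, withDensity_absolutelyContinuous μ f, ?_⟩
  · rwa [withDensity_apply _ .univ, Measure.restrict_univ]
  · filter_upwards [Measure.rnDeriv_withDensity μ hf] with z hz
    exact hz ▸ hf_le z

lemma exists_mem_trimmedSet_measureReal_eq_of_weights [IsProbabilityMeasure μ]
    (hA : MeasurableSet A) {a b : ℝ} (ha : 0 ≤ a) (hb : 0 ≤ b) (haα : a ≤ 1 / (1 - α))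
    (hbα : b ≤ 1 / (1 - α)) (hmass : a * μ.real A + b * μ.real Aᶜ = 1) :
    ∃ ν ∈ trimmedSet μ α, ν.real A = a * μ.real A := by
  set f := A.indicator (fun _ ↦ ENNReal.ofReal a) + Aᶜ.indicator (fun _ ↦ ENNReal.ofReal b)
  have hf_meas : Measurable f :=
    (measurable_const.indicator hA).add (measurable_const.indicator hA.compl)
  have hf_eq : μ.withDensity f =
      ENNReal.ofReal a • μ.restrict A + ENNReal.ofReal b • μ.restrict Aᶜ := by
    rw [withDensity_add_left (measurable_const.indicator hA), withDensity_indicator hA,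
      withDensity_indicator hA.compl, withDensity_const, withDensity_const]
  refine ⟨μ.withDensity f, withDensity_mem_trimmedSet hf_meas ?_ fun z ↦ ?_, ?_⟩
  · rw [← setLIntegral_univ, ← withDensity_apply _ .univ, hf_eq,
      Measure.add_apply, Measure.smul_apply, Measure.smul_apply, Measure.restrict_apply_univ,
      Measure.restrict_apply_univ, smul_eq_mul, smul_eq_mul, ← ofReal_measureReal,
      ← ofReal_measureReal, ← ENNReal.ofReal_mul ha, ← ENNReal.ofReal_mul hb,
      ← ENNReal.ofReal_add (by positivity) (by positivity), hmass, ENNReal.ofReal_one]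
  · by_cases hz : z ∈ A
    · simpa [f, hz] using ENNReal.ofReal_le_ofReal haα
    · simpa [f, hz] using ENNReal.ofReal_le_ofReal hbα
  · simp [hf_eq, Measure.real, hA, ha]

lemma exists_mem_trimmedSet_measureReal_eq [IsProbabilityMeasure μ] (hα₀ : 0 ≤ α)
    (hα₁ : α < 1) (hA : MeasurableSet A) :
    ∃ ν ∈ trimmedSet μ α, ν.real A = max (μ.real A - α) 0 / (1 - α) := by
  have h1α : 0 < 1 - α := sub_pos.2 hα₁
  rcases le_or_gt (μ.real A) α with hm | hm
  · have h1m : 0 < 1 - μ.real A := by linarith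
    obtain ⟨ν, hν, hνA⟩ := exists_mem_trimmedSet_measureReal_eq_of_weights (μ := μ) (α := α)
      (b := 1 / (1 - μ.real A)) hA le_rfl (by positivity) (by positivity)
      (one_div_le_one_div_of_le h1α (by linarith))
      (by rw [probReal_compl_eq_one_sub hA]; field_simp; ring)
    exact ⟨ν, hν, by rw [hνA, zero_mul, max_eq_right (by linarith), zero_div]⟩
  · have hm₀ : 0 < μ.real A := by linarith
    obtain ⟨ν, hν, hνA⟩ := exists_mem_trimmedSet_measureReal_eq_of_weights (μ := μ)
      (a := (μ.real A - α) / ((1 - α) * μ.real A)) (b := 1 / (1 - α)) hA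
      (div_nonneg (by linarith) (by positivity)) (by positivity)
      (by rw [div_le_div_iff₀ (by positivity) h1α]; nlinarith) le_rfl
      (by rw [probReal_compl_eq_one_sub hA]; field_simp; ring)
    exact ⟨ν, hν, by rw [hνA, max_eq_left (by linarith)]; field_simp⟩

lemma isLeast_measureReal_image_trimmedSet [IsProbabilityMeasure μ] (hα₀ : 0 ≤ α)
    (hα₁ : α < 1) (hA : MeasurableSet A) :
    IsLeast ((fun ν ↦ ν.real A) '' trimmedSet μ α) (max (μ.real A - α) 0 / (1 - α)) := by
  obtain ⟨ν, hν, hνA⟩ := exists_mem_trimmedSet_measureReal_eq (μ := μ) hα₀ hα₁ hA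
  refine ⟨⟨ν, hν, hνA⟩, ?_⟩
  rintro _ ⟨ν', hν', rfl⟩
  exact max_sub_div_le_measureReal_of_mem_trimmedSet hα₁ hν' hA

end

/-- Proposition 1: `R_α(g) = (R(g) − α)_+ / (1 − α)`. -/
theorem trimmedErr_eq {p : ℕ} (P : Measure (Bool × (Fin p → ℝ))) [IsProbabilityMeasure P]
    {α : ℝ} (hα : α ∈ Set.Ioo (0 : ℝ) 1)
    {g : (Fin p → ℝ) → Bool} (hg : Measurable g) :
    trimmedErr P α g = max (classErr P g - α) 0 / (1 - α) :=
  (isLeast_measureReal_image_trimmedSet hα.1.le hα.2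
    (measurableSet_eq_fun (hg.comp measurable_snd) measurable_fst).compl).csInf_eq
end
end

section
/- For any classifier g, any trimming level α ∈ (0,1), any sample size n and any sample (Y_1,X_1),…,(Y_n,X_n), the empirical trimmed classification error satisfies R_{n,α}(g) = (R_n(g) − α)_+ / (1 − α). -/
/-!
Write `E` for the misclassified sample points and `c = 1/(n(1-α))` for the weight cap. A weight
vector can put at most `c·|Eᶜ|` of its unit mass on the correctly classified points, so at least
`(1 - c·|Eᶜ|)_+` lands on `E`; filling `Eᶜ` up to the cap (or spreading the mass evenly over `Eᶜ`
when that already suffices) attains this bound. Since `|Eᶜ| = n(1 - R_n(g))`, the bound is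
`(R_n(g) - α)_+ / (1 - α)`.
-/

open MeasureTheory

noncomputable section

/-- Empirical classification error `R_n(g) = (1/n) Σ_i 1{g(X_i) ≠ Y_i}`. -/
def empErr {p : ℕ} (n : ℕ) (ξ : Fin n → Bool × (Fin p → ℝ))
    (g : (Fin p → ℝ) → Bool) : ℝ :=
  (1 / n) * ∑ i, if g (ξ i).2 ≠ (ξ i).1 then (1 : ℝ) else 0

/-- Admissible trimming weight vectors: `0 ≤ w_i ≤ 1/(n(1-α))` and `Σ w_i = 1`. -/
def weightSet (n : ℕ) (α : ℝ) : Set (Fin n → ℝ) :=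
  {w | (∀ i, 0 ≤ w i ∧ w i ≤ 1 / (n * (1 - α))) ∧ ∑ i, w i = 1}

/-- Empirical trimmed classification error
`R_{n,α}(g) = min_{w} Σ_i w_i 1{g(X_i) ≠ Y_i}`. -/
def empTrimmedErr {p : ℕ} (n : ℕ) (α : ℝ) (ξ : Fin n → Bool × (Fin p → ℝ))
    (g : (Fin p → ℝ) → Bool) : ℝ :=
  sInf ((fun w => ∑ i, w i * (if g (ξ i).2 ≠ (ξ i).1 then (1 : ℝ) else 0)) ''
    weightSet n α)

section CappedSimplex

open Finset

def cappedSimplex (ι : Type*) [Fintype ι] (c : ℝ) : Set (ι → ℝ) :=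
  {w | (∀ i, 0 ≤ w i ∧ w i ≤ c) ∧ ∑ i, w i = 1}

variable {ι : Type*} [DecidableEq ι]

theorem sum_ite_mem_self (E : Finset ι) (a b : ℝ) :
    ∑ i ∈ E, (if i ∈ E then a else b) = #E * a := by
  rw [sum_congr rfl fun i hi => if_pos hi, sum_const, nsmul_eq_mul]

variable [Fintype ι]

theorem sum_ite_mem_const (E : Finset ι) (a b : ℝ) :
    ∑ i, (if i ∈ E then a else b) = #E * a + #Eᶜ * b := by
  rw [← sum_add_sum_compl E, sum_ite_mem_self,
    sum_congr rfl fun i hi => if_neg (mem_compl.mp hi), sum_const, nsmul_eq_mul]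

theorem ite_mem_mem_cappedSimplex {c a b : ℝ} (E : Finset ι) (ha : 0 ≤ a ∧ a ≤ c)
    (hb : 0 ≤ b ∧ b ≤ c) (hsum : #E * a + #Eᶜ * b = 1) :
    (fun i => if i ∈ E then a else b) ∈ cappedSimplex ι c := by
  refine ⟨fun i => ?_, by rw [sum_ite_mem_const, hsum]⟩
  by_cases hi : i ∈ E
  · simpa only [if_pos hi] using ha
  · simpa only [if_neg hi] using hb

theorem max_le_sum_of_mem_cappedSimplex {c : ℝ} {w : ι → ℝ} (hw : w ∈ cappedSimplex ι c)
    (E : Finset ι) : max (1 - c * #Eᶜ) 0 ≤ ∑ i ∈ E, w i := by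
  have hcompl : ∑ i ∈ Eᶜ, w i ≤ c * #Eᶜ := by
    calc ∑ i ∈ Eᶜ, w i ≤ ∑ _i ∈ Eᶜ, c := sum_le_sum fun i _ => (hw.1 i).2
      _ = c * #Eᶜ := by rw [sum_const, nsmul_eq_mul, mul_comm]
  have htotal : ∑ i ∈ E, w i + ∑ i ∈ Eᶜ, w i = 1 := by rw [sum_add_sum_compl]; exact hw.2
  exact max_le (by linarith) (sum_nonneg fun i _ => (hw.1 i).1)

theorem exists_mem_cappedSimplex_sum_eq {c : ℝ} (hc : 1 ≤ c * Fintype.card ι) (E : Finset ι) :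
    ∃ w ∈ cappedSimplex ι c, ∑ i ∈ E, w i = max (1 - c * #Eᶜ) 0 := by
  have hcard : (#E : ℝ) + #Eᶜ = Fintype.card ι := by exact_mod_cast card_add_card_compl E
  have hc0 : 0 ≤ c := by
    by_contra! h
    nlinarith [(Fintype.card ι).cast_nonneg (α := ℝ)]
  by_cases hfull : 1 ≤ c * #Eᶜ
  · have hm : (0 : ℝ) < #Eᶜ := by
      by_contra! h
      nlinarith
    refine ⟨fun i => if i ∈ E then 0 else 1 / #Eᶜ, ite_mem_mem_cappedSimplex E ⟨le_rfl, hc0⟩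
      ⟨by positivity, by rw [div_le_iff₀ hm]; linarith⟩ (by field_simp; ring), ?_⟩
    rw [sum_ite_mem_self, mul_zero, max_eq_right (by linarith)]
  · push Not at hfull
    have hk : (0 : ℝ) < #E := by
      by_contra! h
      nlinarith
    refine ⟨fun i => if i ∈ E then (1 - c * #Eᶜ) / #E else c, ite_mem_mem_cappedSimplex E
      ⟨by apply div_nonneg <;> linarith, by rw [div_le_iff₀ hk]; nlinarith⟩ ⟨hc0, le_rfl⟩
      (by field_simp; ring), ?_⟩
    rw [sum_ite_mem_self, max_eq_left (by linarith)]
    field_simp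

theorem isLeast_sum_image_cappedSimplex {c : ℝ} (hc : 1 ≤ c * Fintype.card ι) (E : Finset ι) :
    IsLeast ((fun w => ∑ i ∈ E, w i) '' cappedSimplex ι c) (max (1 - c * #Eᶜ) 0) := by
  obtain ⟨w, hw, hsum⟩ := exists_mem_cappedSimplex_sum_eq hc E
  exact ⟨⟨w, hw, hsum⟩, by rintro _ ⟨v, hv, rfl⟩; exact max_le_sum_of_mem_cappedSimplex hv E⟩

end CappedSimplex

theorem weightSet_eq_cappedSimplex (n : ℕ) (α : ℝ) :
    weightSet n α = cappedSimplex (Fin n) (1 / (n * (1 - α))) :=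
  rfl

theorem empTrimmedErr_eq_general {p : ℕ} {n : ℕ} (hn : 0 < n) {α : ℝ}
    (hα : α ∈ Set.Ioo (0 : ℝ) 1) (ξ : Fin n → Bool × (Fin p → ℝ))
    {g : (Fin p → ℝ) → Bool} :
    empTrimmedErr n α ξ g = max (empErr n ξ g - α) 0 / (1 - α) := by
  obtain ⟨hα0, hα1⟩ := hα
  set E := Finset.univ.filter fun i => g (ξ i).2 ≠ (ξ i).1
  have hobjective : (fun w : Fin n → ℝ => ∑ i, w i * if g (ξ i).2 ≠ (ξ i).1 then (1 : ℝ) else 0)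
      = fun w => ∑ i ∈ E, w i := by
    simp only [mul_ite, mul_one, mul_zero, ← Finset.sum_filter, E]
  have hn' : (0 : ℝ) < n := Nat.cast_pos.mpr hn
  have hfeasible : 1 ≤ 1 / (n * (1 - α)) * Fintype.card (Fin n) := by
    rw [Fintype.card_fin, one_div_mul_eq_div, one_le_div (by nlinarith)]
    nlinarith
  have hcompl : ((Eᶜ).card : ℝ) = n - E.card := by
    rw [Finset.card_compl, Fintype.card_fin,
      Nat.cast_sub ((Finset.card_le_univ E).trans_eq (Fintype.card_fin n))]
  rw [empTrimmedErr, hobjective, weightSet_eq_cappedSimplex,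
    (isLeast_sum_image_cappedSimplex hfeasible E).csInf_eq, hcompl, empErr, Finset.sum_boole,
    ← max_div_div_right (by linarith), zero_div]
  congr 1
  field_simp
  ring

/-- Corollary 1: `R_{n,α}(g) = (R_n(g) − α)_+ / (1 − α)`. -/
theorem empTrimmedErr_eq {p : ℕ} {n : ℕ} (hn : 0 < n) {α : ℝ}
    (hα : α ∈ Set.Ioo (0 : ℝ) 1) (ξ : Fin n → Bool × (Fin p → ℝ))
    {g : (Fin p → ℝ) → Bool} (hg : Measurable g) :
    empTrimmedErr n α ξ g = max (empErr n ξ g - α) 0 / (1 - α) :=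
  empTrimmedErr_eq_general hn hα ξ

end
end

section
/- Characterization of trimmed distributions through their class-conditional components. Let P and Q be probability measures on {0,1}×ℝ^p, write p₀ = P({0}×ℝ^p) and q₀ = Q({0}×ℝ^p), and assume p₀ ∈ (0,1) and q₀ ∈ (0,1). Let P₀, P₁ (resp. Q₀, Q₁) be the probability measures on ℝ^p defined by P₀(B) = P({0}×B)/p₀ and P₁(B) = P({1}×B)/(1−p₀) (analogously for Q). Then for α ∈ (0,1), Q ∈ 𝓡_α(P) if and only if q₀ ≤ p₀/(1−α), 1−q₀ ≤ (1−p₀)/(1−α), Q₀ ∈ 𝓡_{1−(q₀/p₀)(1−α)}(P₀) and Q₁ ∈ 𝓡_{1−((1−q₀)/(1−p₀))(1−α)}(P₁). -/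
open MeasureTheory
open scoped ENNReal

noncomputable section

/-- The class-conditional distribution of the features given label `b`:
`condMeasure P b (B) = P({b} × B) / P({b} × ℝ^p)`. -/
def condMeasure {p : ℕ} (P : Measure (Bool × (Fin p → ℝ))) (b : Bool) :
    Measure (Fin p → ℝ) :=
  (P {z | z.1 = b})⁻¹ • Measure.map Prod.snd (P.restrict {z | z.1 = b})

section Aux

lemma absCont_rnDeriv_iff_le {Ω : Type*} [MeasurableSpace Ω] (μ ν : Measure Ω)
    [IsFiniteMeasure μ] [IsFiniteMeasure ν] {c : ℝ≥0∞} (hc0 : c ≠ 0) (hct : c ≠ ∞) :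
    (ν ≪ μ ∧ ∀ᵐ z ∂μ, ν.rnDeriv μ z ≤ c) ↔ ν ≤ c • μ := by
  constructor
  · rintro ⟨hac, hae⟩
    rw [Measure.le_iff]
    intro s hs
    calc ν s = ∫⁻ x in s, ν.rnDeriv μ x ∂μ := (Measure.setLIntegral_rnDeriv hac s).symm
    _ ≤ ∫⁻ _ in s, c ∂μ := setLIntegral_mono_ae aemeasurable_const (hae.mono fun x hx _ => hx)
    _ = c * μ s := by simp [setLIntegral_const]
    _ = (c • μ) s := by simp [Measure.smul_apply]
  · intro h
    have hfin : IsFiniteMeasure (c • μ) := by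
      constructor
      simp only [Measure.smul_apply, smul_eq_mul]
      exact ENNReal.mul_lt_top hct.lt_top (measure_lt_top μ _)
    have hac : ν ≪ μ := by
      refine (Measure.absolutelyContinuous_of_le h).trans ?_
      intro s hs
      simp [Measure.smul_apply, hs]
    refine ⟨hac, ?_⟩
    have h1 : ν.rnDeriv (c • μ) ≤ᵐ[c • μ] 1 := Measure.rnDeriv_le_one_of_le h
    have h2 : ν.rnDeriv (c • μ) ≤ᵐ[μ] 1 :=
      h1.filter_mono (Measure.absolutelyContinuous_smul hc0).ae_le
    have h3 : ν.rnDeriv (c • μ) =ᵐ[μ] c⁻¹ • ν.rnDeriv μ :=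
      Measure.rnDeriv_smul_right_of_ne_top ν μ hc0 hct
    filter_upwards [h2, h3] with x hx hx3
    rw [hx3] at hx
    simp only [Pi.smul_apply, smul_eq_mul, Pi.one_apply] at hx
    calc ν.rnDeriv μ x = c * c⁻¹ * ν.rnDeriv μ x := by
          rw [ENNReal.mul_inv_cancel hc0 hct, one_mul]
    _ = c * (c⁻¹ * ν.rnDeriv μ x) := by ring
    _ ≤ c * 1 := mul_le_mul_right hx c
    _ = c := mul_one c

variable {X : Type*} [MeasurableSpace X]

lemma Smeas (b : Bool) : MeasurableSet {z : Bool × X | z.1 = b} :=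
  measurable_fst (measurableSet_singleton b)

lemma comp_apply (R : Measure (Bool × X)) (b : Bool) {B : Set X} (hB : MeasurableSet B) :
    Measure.map Prod.snd (R.restrict {z | z.1 = b}) B
      = R (Prod.snd ⁻¹' B ∩ {z | z.1 = b}) := by
  rw [Measure.map_apply measurable_snd hB, Measure.restrict_apply (measurable_snd hB)]

omit [MeasurableSpace X] in
lemma inter_eq (b : Bool) {A : Set (Bool × X)} :
    Prod.snd ⁻¹' (Prod.mk b ⁻¹' A) ∩ {z : Bool × X | z.1 = b} = A ∩ {z | z.1 = b} := by
  ext ⟨b', x⟩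
  simp only [Set.mem_inter_iff, Set.mem_preimage, Set.mem_setOf_eq]
  constructor
  · rintro ⟨h1, rfl⟩; exact ⟨h1, rfl⟩
  · rintro ⟨h1, rfl⟩; exact ⟨h1, rfl⟩

lemma restr_apply (R : Measure (Bool × X)) (b : Bool) {A : Set (Bool × X)}
    (hA : MeasurableSet A) :
    Measure.map Prod.snd (R.restrict {z | z.1 = b}) (Prod.mk b ⁻¹' A)
      = R (A ∩ {z | z.1 = b}) := by
  rw [comp_apply R b (measurable_prodMk_left hA), inter_eq]

lemma comp_univ (R : Measure (Bool × X)) (b : Bool) :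
    Measure.map Prod.snd (R.restrict {z | z.1 = b}) Set.univ = R {z | z.1 = b} := by
  rw [comp_apply R b MeasurableSet.univ]
  simp

lemma le_smul_iff_components (P Q : Measure (Bool × X)) (c : ℝ≥0∞) :
    Q ≤ c • P ↔ ∀ b : Bool, Measure.map Prod.snd (Q.restrict {z | z.1 = b}) ≤
      c • Measure.map Prod.snd (P.restrict {z | z.1 = b}) := by
  constructor
  · intro h b
    rw [Measure.le_iff]
    intro B hB
    rw [Measure.smul_apply, smul_eq_mul, comp_apply Q b hB, comp_apply P b hB]
    have := Measure.le_iff.1 h (Prod.snd ⁻¹' B ∩ {z | z.1 = b})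
      ((measurable_snd hB).inter (Smeas b))
    simpa [Measure.smul_apply] using this
  · intro h
    rw [Measure.le_iff]
    intro A hA
    have hsplit : ∀ R : Measure (Bool × X),
        R A = R (A ∩ {z | z.1 = false}) + R (A ∩ {z | z.1 = true}) := by
      intro R
      have hd : A \ {z : Bool × X | z.1 = false} = A ∩ {z | z.1 = true} := by
        ext z; simp [Set.mem_diff]
      rw [← measure_inter_add_diff A (Smeas false), hd]
    have hb : ∀ b : Bool, Q (A ∩ {z | z.1 = b}) ≤ c * P (A ∩ {z | z.1 = b}) := by
      intro b
      rw [← restr_apply Q b hA, ← restr_apply P b hA]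
      have := Measure.le_iff.1 (h b) (Prod.mk b ⁻¹' A) (measurable_prodMk_left hA)
      simpa [Measure.smul_apply] using this
    rw [Measure.smul_apply, smul_eq_mul, hsplit Q, hsplit P, mul_add]
    exact add_le_add (hb false) (hb true)

lemma cond_prob {p : ℕ} (Q : Measure (Bool × (Fin p → ℝ))) [IsFiniteMeasure Q] (b : Bool)
    (h0 : Q {z | z.1 = b} ≠ 0) : IsProbabilityMeasure (condMeasure Q b) := by
  constructor
  rw [condMeasure, Measure.smul_apply, smul_eq_mul, comp_univ]
  exact ENNReal.inv_mul_cancel h0 (measure_ne_top _ _)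

lemma cond_step {p : ℕ} (P Q : Measure (Bool × (Fin p → ℝ)))
    [IsProbabilityMeasure P] [IsProbabilityMeasure Q] (b : Bool)
    {α : ℝ} (hα : α ∈ Set.Ioo (0:ℝ) 1)
    (hp : 0 < (P {z | z.1 = b}).toReal) (hq : 0 < (Q {z | z.1 = b}).toReal) :
    (condMeasure Q b ∈ trimmedSet (condMeasure P b)
        (1 - ((Q {z | z.1 = b}).toReal / (P {z | z.1 = b}).toReal) * (1 - α)))
    ↔ Measure.map Prod.snd (Q.restrict {z | z.1 = b}) ≤
        ENNReal.ofReal (1/(1-α)) • Measure.map Prod.snd (P.restrict {z | z.1 = b}) := by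
  obtain ⟨hα0, hα1⟩ := hα
  have h1α : (0:ℝ) < 1 - α := by linarith
  set pe := P {z | z.1 = b} with hpe
  set qe := Q {z | z.1 = b} with hqe
  set pr := pe.toReal with hpr
  set qr := qe.toReal with hqr
  have hpet : pe ≠ ∞ := measure_ne_top _ _
  have hqet : qe ≠ ∞ := measure_ne_top _ _
  have hpe0 : pe ≠ 0 := by
    intro h; rw [hpr, h] at hp; simp at hp
  have hqe0 : qe ≠ 0 := by
    intro h; rw [hqr, h] at hq; simp at hq
  have hpeo : pe = ENNReal.ofReal pr := (ENNReal.ofReal_toReal hpet).symm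
  have hqeo : qe = ENNReal.ofReal qr := (ENNReal.ofReal_toReal hqet).symm
  haveI hQprob : IsProbabilityMeasure (condMeasure Q b) := cond_prob Q b hqe0
  haveI hPprob : IsProbabilityMeasure (condMeasure P b) := cond_prob P b hpe0
  set c : ℝ≥0∞ := ENNReal.ofReal (1/(1-α)) with hc
  set cb : ℝ≥0∞ := ENNReal.ofReal (1 / (1 - (1 - qr / pr * (1 - α)))) with hcb
  have hcbpos : (0:ℝ) < 1 / (1 - (1 - qr / pr * (1 - α))) := by
    rw [_root_.sub_sub_cancel]
    positivity
  have hcb0 : cb ≠ 0 := by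
    rw [hcb, ne_eq, ENNReal.ofReal_eq_zero, not_le]; exact hcbpos
  have hcbt : cb ≠ ∞ := ENNReal.ofReal_ne_top
  have harith : cb * pe⁻¹ = qe⁻¹ * c := by
    rw [hpeo, hqeo, ← ENNReal.ofReal_inv_of_pos hp, ← ENNReal.ofReal_inv_of_pos hq,
      hcb, hc, ← ENNReal.ofReal_mul hcbpos.le, ← ENNReal.ofReal_mul (by positivity)]
    congr 1
    rw [_root_.sub_sub_cancel]
    field_simp
  have step1 : (condMeasure Q b ∈ trimmedSet (condMeasure P b)
        (1 - qr / pr * (1 - α)))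
      ↔ condMeasure Q b ≤ cb • condMeasure P b := by
    constructor
    · rintro ⟨_, h2, h3⟩
      exact (absCont_rnDeriv_iff_le _ _ hcb0 hcbt).1 ⟨h2, h3⟩
    · intro h
      obtain ⟨h2, h3⟩ := (absCont_rnDeriv_iff_le _ _ hcb0 hcbt).2 h
      exact ⟨hQprob, h2, h3⟩
  rw [step1]
  rw [condMeasure, condMeasure, smul_smul, harith, mul_smul]
  constructor
  · intro h
    rw [Measure.le_iff] at h ⊢
    intro s hs
    have := h s hs
    simp only [Measure.smul_apply, smul_eq_mul] at this ⊢
    rwa [ENNReal.mul_le_mul_iff_right (ENNReal.inv_ne_zero.2 hqet)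
      (by simpa using hqe0 : qe⁻¹ ≠ ∞)] at this
  · intro h
    rw [Measure.le_iff] at h ⊢
    intro s hs
    have := h s hs
    simp only [Measure.smul_apply, smul_eq_mul] at this ⊢
    rwa [ENNReal.mul_le_mul_iff_right (ENNReal.inv_ne_zero.2 hqet)
      (by simpa using hqe0 : qe⁻¹ ≠ ∞)]

end Aux

/-- Lemma 1: characterization of trimmed distributions through their mixture weights and
class-conditional components.  Here the label `0` is encoded by `false` and the label
`1` by `true`, `p₀ = P({0}×ℝ^p)` and `q₀ = Q({0}×ℝ^p)`. -/
theorem mem_trimmedSet_iff_conditionals {p : ℕ}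
    (P Q : Measure (Bool × (Fin p → ℝ)))
    [IsProbabilityMeasure P] [IsProbabilityMeasure Q]
    {α : ℝ} (hα : α ∈ Set.Ioo (0 : ℝ) 1)
    (hp₀ : (P {z | z.1 = false}).toReal ∈ Set.Ioo (0 : ℝ) 1)
    (hq₀ : (Q {z | z.1 = false}).toReal ∈ Set.Ioo (0 : ℝ) 1) :
    Q ∈ trimmedSet P α ↔
      ((Q {z | z.1 = false}).toReal ≤ (P {z | z.1 = false}).toReal / (1 - α) ∧
       1 - (Q {z | z.1 = false}).toReal ≤
          (1 - (P {z | z.1 = false}).toReal) / (1 - α) ∧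
       condMeasure Q false ∈ trimmedSet (condMeasure P false)
          (1 - ((Q {z | z.1 = false}).toReal / (P {z | z.1 = false}).toReal) * (1 - α)) ∧
       condMeasure Q true ∈ trimmedSet (condMeasure P true)
          (1 - ((1 - (Q {z | z.1 = false}).toReal) /
              (1 - (P {z | z.1 = false}).toReal)) * (1 - α))) := by
  have h1α : (0:ℝ) < 1 - α := by linarith [hα.2]
  have hc0 : ENNReal.ofReal (1/(1-α)) ≠ 0 := by
    rw [ne_eq, ENNReal.ofReal_eq_zero, not_le]; positivity
  have hct : ENNReal.ofReal (1/(1-α)) ≠ ∞ := ENNReal.ofReal_ne_top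
  have hcompl : {z : Bool × (Fin p → ℝ) | z.1 = true}
      = {z : Bool × (Fin p → ℝ) | z.1 = false}ᶜ := by
    ext z; simp
  have hPt : P {z | z.1 = true} = 1 - P {z | z.1 = false} := by
    rw [hcompl, prob_compl_eq_one_sub (Smeas false)]
  have hQt : Q {z | z.1 = true} = 1 - Q {z | z.1 = false} := by
    rw [hcompl, prob_compl_eq_one_sub (Smeas false)]
  have hPtr : (P {z | z.1 = true}).toReal = 1 - (P {z | z.1 = false}).toReal := by
    rw [hPt, ENNReal.toReal_sub_of_le prob_le_one ENNReal.one_ne_top, ENNReal.toReal_one]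
  have hQtr : (Q {z | z.1 = true}).toReal = 1 - (Q {z | z.1 = false}).toReal := by
    rw [hQt, ENNReal.toReal_sub_of_le prob_le_one ENNReal.one_ne_top, ENNReal.toReal_one]
  have hpT : 0 < (P {z | z.1 = true}).toReal := by rw [hPtr]; linarith [hp₀.2]
  have hqT : 0 < (Q {z | z.1 = true}).toReal := by rw [hQtr]; linarith [hq₀.2]
  have hQP : Q ∈ trimmedSet P α ↔ Q ≤ ENNReal.ofReal (1/(1-α)) • P := by
    constructor
    · rintro ⟨_, h2, h3⟩
      exact (absCont_rnDeriv_iff_le P Q hc0 hct).1 ⟨h2, h3⟩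
    · intro h
      obtain ⟨h2, h3⟩ := (absCont_rnDeriv_iff_le P Q hc0 hct).2 h
      exact ⟨inferInstance, h2, h3⟩
  have hfalse := cond_step P Q false hα hp₀.1 hq₀.1
  have htrue := cond_step P Q true hα hpT hqT
  rw [hPtr, hQtr] at htrue
  rw [hQP, le_smul_iff_components]
  constructor
  · intro h
    have scalar : ∀ b : Bool, (Q {z | z.1 = b}).toReal
        ≤ (P {z | z.1 = b}).toReal / (1 - α) := by
      intro b
      have e1 : Q {z | z.1 = b} ≤ ENNReal.ofReal (1/(1-α)) * P {z | z.1 = b} := by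
        have := Measure.le_iff.1 (h b) Set.univ MeasurableSet.univ
        rwa [Measure.smul_apply, smul_eq_mul, comp_univ, comp_univ] at this
      have e2 := ENNReal.toReal_mono
        (ENNReal.mul_ne_top hct (measure_ne_top _ _)) e1
      rw [ENNReal.toReal_mul, ENNReal.toReal_ofReal (by positivity)] at e2
      calc (Q {z | z.1 = b}).toReal ≤ 1/(1-α) * (P {z | z.1 = b}).toReal := e2
      _ = (P {z | z.1 = b}).toReal / (1 - α) := by ring
    have s2 := scalar true
    rw [hPtr, hQtr] at s2
    exact ⟨scalar false, s2, hfalse.2 (h false), htrue.2 (h true)⟩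
  · rintro ⟨-, -, hmf, hmt⟩
    intro b
    cases b
    · exact hfalse.1 hmf
    · exact htrue.1 hmt

end
end

section
/- Let P be a probability measure on {0,1}×ℝ^p with p₀ = P({0}×ℝ^p) ∈ (0,1) and conditional distributions P₀, P₁ on ℝ^p (P₀(B) = P({0}×B)/p₀, P₁(B) = P({1}×B)/(1−p₀)). Then for every classifier g and every α ∈ (0,1), the trimmed classification error admits the representation R_α(g) = min over q₀ with 1 − (1−p₀)/(1−α) ≤ q₀ ≤ p₀/(1−α) of [ (q₀ − (p₀/(1−α)) P₀({x : g(x)=0}))_+ + (1 − q₀ − ((1−p₀)/(1−α)) P₁({x : g(x)=1}))_+ ]. -/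
/-!
A trimmed version `Q` of `P` has density at most `1/(1-α)`, so it puts mass at most `P(E)/(1-α)`
on the set `E` where `g` is correct, and saturating the density on `E` shows that this bound is
attained: `R_α(g) = (1 - P(E)/(1-α))_+`. Writing
`P(E) = p₀ P₀(g=0) + (1-p₀) P₁(g=1) = (1-α)(a + b)`, the function
`q ↦ (q - a)_+ + (1 - q - b)_+` is bounded below by `(1 - a - b)_+`, with equality at
`q = max(a, 1 - (1-p₀)/(1-α))`, which lies in the admissible interval.
-/

open MeasureTheory

noncomputable section

open scoped ENNReal

theorem ENNReal.toReal_one_sub_ofReal_mul {c : ℝ} (hc : 0 ≤ c) {a : ℝ≥0∞} (ha : a ≠ ∞) :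
    (1 - ENNReal.ofReal c * a).toReal = max (1 - c * a.toReal) 0 := by
  rw [← ENNReal.ofReal_toReal ha, ← ENNReal.ofReal_mul hc, ← ENNReal.ofReal_one,
    ← ENNReal.ofReal_sub _ (by positivity), ENNReal.toReal_ofReal',
    ENNReal.toReal_ofReal ENNReal.toReal_nonneg]

theorem isLeast_image_max_sub_add_max_sub {a b L U : ℝ} (hLU : L ≤ U) (haU : a ≤ U)
    (hLb : L ≤ 1 - b) :
    IsLeast ((fun q => max (q - a) 0 + max (1 - q - b) 0) '' Set.Icc L U)
      (max (1 - a - b) 0) := by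
  refine ⟨⟨max L a, ⟨le_max_left _ _, max_le hLU haU⟩, ?_⟩, ?_⟩
  · rcases le_total L a with h | h
    · simp only [max_eq_right h, sub_self, max_self, zero_add]
    · dsimp only
      rw [max_eq_left h, max_eq_left (sub_nonneg.2 h), max_eq_left (by linarith : 0 ≤ 1 - L - b),
        max_eq_left (by linarith)]
      ring
  · rintro _ ⟨q, -, rfl⟩
    exact max_le (by linarith [le_max_left (q - a) 0, le_max_left (1 - q - b) 0]) (by positivity)

namespace MeasureTheory

variable {Ω : Type*} [MeasurableSpace Ω] {μ : Measure Ω} {α : ℝ} {S : Set Ω}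

theorem measure_le_of_mem_trimmedSet [SigmaFinite μ] {Q : Measure Ω}
    (hQ : Q ∈ trimmedSet μ α) (S : Set Ω) :
    Q S ≤ ENNReal.ofReal (1 / (1 - α)) * μ S := by
  obtain ⟨hQprob, hQμ, hdens⟩ := hQ
  calc Q S = ∫⁻ z in S, Q.rnDeriv μ z ∂μ := (Measure.setLIntegral_rnDeriv hQμ S).symm
    _ ≤ ∫⁻ _ in S, ENNReal.ofReal (1 / (1 - α)) ∂μ :=
      lintegral_mono_ae (ae_restrict_of_ae hdens)
    _ = ENNReal.ofReal (1 / (1 - α)) * μ S := setLIntegral_const S _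

theorem exists_mem_trimmedSet_measure_compl_eq [IsFiniteMeasure μ] (hS : MeasurableSet S)
    {x y : ℝ≥0∞} (hx : x ≤ ENNReal.ofReal (1 / (1 - α)) * μ S)
    (hy : y ≤ ENNReal.ofReal (1 / (1 - α)) * μ Sᶜ) (hxy : x + y = 1) :
    ∃ Q ∈ trimmedSet μ α, Q Sᶜ = y := by
  classical
  set c := ENNReal.ofReal (1 / (1 - α))
  -- the witness has constant density `x / μ S` on `S` and `y / μ Sᶜ` on `Sᶜ`; on a null set the
  -- corresponding mass is `0` by `hx`/`hy`, and `0 / 0 = 0` in `ℝ≥0∞`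
  have density_mul {T : Set Ω} {t : ℝ≥0∞} (ht : t ≤ c * μ T) : t / μ T * μ T = t :=
    ENNReal.div_mul_cancel' (fun h => by simpa [h] using ht)
      fun h => absurd h (measure_ne_top μ T)
  set f := S.piecewise (fun _ => x / μ S) (fun _ => y / μ Sᶜ)
  have hf : Measurable f := Measurable.piecewise hS measurable_const measurable_const
  have hQS : μ.withDensity f S = x := by
    rw [withDensity_apply _ hS, setLIntegral_congr_fun hS fun z hz => S.piecewise_eq_of_mem _ _ hz,
      setLIntegral_const, density_mul hx]
  have hQSc : μ.withDensity f Sᶜ = y := by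
    rw [withDensity_apply _ hS.compl,
      setLIntegral_congr_fun hS.compl fun z hz => S.piecewise_eq_of_notMem _ _ hz,
      setLIntegral_const, density_mul hy]
  have hf_le : f ≤ fun _ => c := Set.piecewise_le
    (fun _ _ => ENNReal.div_le_of_le_mul hx) (fun _ _ => ENNReal.div_le_of_le_mul hy)
  refine ⟨μ.withDensity f, ⟨⟨?_⟩, withDensity_absolutelyContinuous μ f, ?_⟩, hQSc⟩
  · rw [← measure_add_measure_compl hS, hQS, hQSc, hxy]
  · filter_upwards [Measure.rnDeriv_withDensity μ hf] with z hz
    exact hz ▸ hf_le z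

theorem isLeast_measure_compl_trimmedSet [IsProbabilityMeasure μ] (hα₀ : 0 ≤ α)
    (hα₁ : α < 1) (hS : MeasurableSet S) :
    IsLeast ((fun Q => Q Sᶜ) '' trimmedSet μ α) (1 - ENNReal.ofReal (1 / (1 - α)) * μ S) := by
  set c := ENNReal.ofReal (1 / (1 - α))
  have hc : 1 ≤ c := ENNReal.one_le_ofReal.mpr (one_le_one_div (by linarith) (by linarith))
  refine ⟨?_, ?_⟩
  -- saturate the density bound on `S`, or put all the mass there if that exceeds `1`
  · have hy : 1 - c * μ S ≤ c * μ Sᶜ := by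
      rw [tsub_le_iff_left, ← mul_add, measure_add_measure_compl hS, measure_univ, mul_one]
      exact hc
    have hxy : min (c * μ S) 1 + (1 - c * μ S) = 1 := by
      rcases le_total (c * μ S) 1 with h | h
      · rw [min_eq_left h, add_tsub_cancel_of_le h]
      · rw [min_eq_right h, tsub_eq_zero_of_le h, add_zero]
    exact exists_mem_trimmedSet_measure_compl_eq hS (min_le_left _ _) hy hxy
  · rintro _ ⟨Q, hQ, rfl⟩
    have := hQ.1
    rw [tsub_le_iff_left]
    calc 1 = Q S + Q Sᶜ := by rw [measure_add_measure_compl hS, measure_univ]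
      _ ≤ c * μ S + Q Sᶜ := by gcongr; exact measure_le_of_mem_trimmedSet hQ S

end MeasureTheory

section Classification

variable {p : ℕ}

theorem trimmedErr_eq_max (P : Measure (Bool × (Fin p → ℝ))) [IsProbabilityMeasure P]
    {α : ℝ} (hα₀ : 0 ≤ α) (hα₁ : α < 1) {g : (Fin p → ℝ) → Bool} (hg : Measurable g) :
    trimmedErr P α g = max (1 - (P {z | g z.2 = z.1}).toReal / (1 - α)) 0 := by
  have hS : MeasurableSet {z : Bool × (Fin p → ℝ) | g z.2 = z.1} :=
    measurableSet_eq_fun (hg.comp measurable_snd) measurable_fst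
  have hleast := isLeast_measure_compl_trimmedSet hα₀ hα₁ hS (μ := P)
  have hmono :
      MonotoneOn ENNReal.toReal ((fun Q => Q {z | g z.2 = z.1}ᶜ) '' trimmedSet P α) := by
    rintro _ - _ ⟨Q, hQ, rfl⟩ hle
    have := hQ.1
    exact ENNReal.toReal_mono (measure_ne_top Q _) hle
  have himage : (fun Q : Measure _ => (Q {z | g z.2 = z.1}ᶜ).toReal) '' trimmedSet P α =
      ENNReal.toReal '' ((fun Q => Q {z | g z.2 = z.1}ᶜ) '' trimmedSet P α) :=
    (Set.image_image _ _ _).symm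
  rw [trimmedErr, ← Set.compl_ofPred, himage, (hmono.map_isLeast hleast).csInf_eq,
    ENNReal.toReal_one_sub_ofReal_mul (by positivity) (measure_ne_top P _), one_div_mul_eq_div]

theorem measure_setOf_apply_snd_eq_fst {X : Type*} [MeasurableSpace X]
    (P : Measure (Bool × X)) {g : X → Bool} (hg : Measurable g) :
    P {z | g z.2 = z.1} = P (Prod.snd ⁻¹' {x | g x = false} ∩ {z | z.1 = false}) +
      P (Prod.snd ⁻¹' {x | g x = true} ∩ {z | z.1 = true}) := by
  rw [← measure_union]
  · congr 1
    ext ⟨b, x⟩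
    cases b <;> cases g x <;> simp
  · exact Set.disjoint_left.2 fun _ h₁ h₂ => Bool.false_ne_true (h₁.2.symm.trans h₂.2)
  · exact (measurable_snd (hg (measurableSet_singleton true))).inter
      (measurable_fst (measurableSet_singleton true))

theorem measure_fst_mul_condMeasure (P : Measure (Bool × (Fin p → ℝ))) [IsFiniteMeasure P]
    (b : Bool) {B : Set (Fin p → ℝ)} (hB : MeasurableSet B) :
    P {z | z.1 = b} * condMeasure P b B = P (Prod.snd ⁻¹' B ∩ {z | z.1 = b}) := by
  rw [condMeasure, Measure.smul_apply, smul_eq_mul, Measure.map_apply measurable_snd hB,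
    Measure.restrict_apply (measurable_snd hB), ← mul_assoc]
  rcases eq_or_ne (P {z | z.1 = b}) 0 with h | h
  · rw [h, zero_mul, zero_mul, measure_mono_null Set.inter_subset_right h]
  · rw [ENNReal.mul_inv_cancel h (measure_ne_top _ _), one_mul]

end Classification

/-- The label `0` is encoded by `false` and `1` by `true`. -/
theorem trimmedErr_eq_min_over_q0_general {p : ℕ}
    (P : Measure (Bool × (Fin p → ℝ))) [IsProbabilityMeasure P]
    {α : ℝ} (hα : α ∈ Set.Ioo (0 : ℝ) 1)
    {g : (Fin p → ℝ) → Bool} (hg : Measurable g) :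
    trimmedErr P α g =
      sInf ((fun q₀ =>
          max (q₀ - ((P {z | z.1 = false}).toReal / (1 - α)) *
              (condMeasure P false {x | g x = false}).toReal) 0 +
          max (1 - q₀ - ((1 - (P {z | z.1 = false}).toReal) / (1 - α)) *
              (condMeasure P true {x | g x = true}).toReal) 0) ''
        Set.Icc (1 - (1 - (P {z | z.1 = false}).toReal) / (1 - α))
          ((P {z | z.1 = false}).toReal / (1 - α))) := by
  obtain ⟨hα₀, hα₁⟩ := hα
  have hcompl : 1 - (P {z | z.1 = false}).toReal = (P {z | z.1 = true}).toReal := by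
    rw [← ENNReal.toReal_one, ← ENNReal.toReal_sub_of_le prob_le_one ENNReal.one_ne_top,
      ← prob_compl_eq_one_sub (measurableSet_eq_fun measurable_fst measurable_const)]
    congr with z
    simp
  have hcond (b : Bool) : (P {z | z.1 = b}).toReal / (1 - α) *
      (condMeasure P b {x | g x = b}).toReal =
        (P (Prod.snd ⁻¹' {x | g x = b} ∩ {z | z.1 = b})).toReal / (1 - α) := by
    rw [div_mul_eq_mul_div, ← ENNReal.toReal_mul,
      measure_fst_mul_condMeasure P b (measurableSet_eq_fun hg measurable_const)]
  have hA : (P (Prod.snd ⁻¹' {x | g x = false} ∩ {z | z.1 = false})).toReal ≤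
      (P {z | z.1 = false}).toReal :=
    ENNReal.toReal_mono (measure_ne_top _ _) (measure_mono Set.inter_subset_right)
  have hC : (P (Prod.snd ⁻¹' {x | g x = true} ∩ {z | z.1 = true})).toReal ≤
      (P {z | z.1 = true}).toReal :=
    ENNReal.toReal_mono (measure_ne_top _ _) (measure_mono Set.inter_subset_right)
  rw [hcompl, hcond false, hcond true, trimmedErr_eq_max P hα₀.le hα₁ hg,
    measure_setOf_apply_snd_eq_fst P hg,
    ENNReal.toReal_add (measure_ne_top _ _) (measure_ne_top _ _), add_div, ← sub_sub]
  refine (isLeast_image_max_sub_add_max_sub ?_ ?_ ?_).csInf_eq.symm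
  · rw [sub_le_iff_le_add, ← add_div, ← hcompl, add_sub_cancel]
    exact one_le_one_div (by linarith) (by linarith)
  · exact div_le_div_of_nonneg_right hA (by linarith)
  · exact sub_le_sub_left (div_le_div_of_nonneg_right hC (by linarith)) 1

/-- Lemma 2: the trimmed classification error is the minimum over the mixture weight
`q₀` ranging in `[1 − (1−p₀)/(1−α), p₀/(1−α)]` of
`(q₀ − (p₀/(1−α)) P₀(g=0))_+ + (1 − q₀ − ((1−p₀)/(1−α)) P₁(g=1))_+`.
The label `0` is encoded by `false` and `1` by `true`. -/
theorem trimmedErr_eq_min_over_q0 {p : ℕ}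
    (P : Measure (Bool × (Fin p → ℝ))) [IsProbabilityMeasure P]
    (hp₀ : (P {z | z.1 = false}).toReal ∈ Set.Ioo (0 : ℝ) 1)
    {α : ℝ} (hα : α ∈ Set.Ioo (0 : ℝ) 1)
    {g : (Fin p → ℝ) → Bool} (hg : Measurable g) :
    trimmedErr P α g =
      sInf ((fun q₀ =>
          max (q₀ - ((P {z | z.1 = false}).toReal / (1 - α)) *
              (condMeasure P false {x | g x = false}).toReal) 0 +
          max (1 - q₀ - ((1 - (P {z | z.1 = false}).toReal) / (1 - α)) *
              (condMeasure P true {x | g x = true}).toReal) 0) ''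
        Set.Icc (1 - (1 - (P {z | z.1 = false}).toReal) / (1 - α))
          ((P {z | z.1 = false}).toReal / (1 - α))) :=
  trimmedErr_eq_min_over_q0_general P hα hg

end
end

section
/- Bounded differences property of the empirical trimmed classification error. Let g be a classifier, α ∈ (0,1), and let (ξ_1,…,ξ_n) and (ξ'_1,…,ξ'_n) be two samples in {0,1}×ℝ^p that differ only in their i-th coordinate (ξ_j = ξ'_j for all j ≠ i). Then |R_{n,α}(g)(ξ_1,…,ξ_n) − R_{n,α}(g)(ξ'_1,…,ξ'_n)| ≤ 1/(n(1−α)). -/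
open MeasureTheory

noncomputable section

/-! Each admissible weight gives at most `1/(n(1-α))` to the changed observation, whose loss
moves by at most `1`, so every weighted error moves by at most `1/(n(1-α))`; this pointwise
bound passes to the infimum over the weights. -/

theorem Real.sInf_image_le_sInf_image_add {ι : Type*} {S : Set ι} {f f' : ι → ℝ} {c : ℝ}
    (hc : 0 ≤ c) (hf : BddBelow (f '' S)) (h : ∀ x ∈ S, f x ≤ f' x + c) :
    sInf (f '' S) ≤ sInf (f' '' S) + c := by
  rcases S.eq_empty_or_nonempty with rfl | hS
  · simpa using hc -- `sInf ∅ = 0` on both sides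
  rw [← sub_le_iff_le_add]
  refine le_csInf (hS.image f') ?_
  rintro _ ⟨x, hx, rfl⟩
  linarith [csInf_le hf (Set.mem_image_of_mem f hx), h x hx]

theorem Fintype.sum_mul_le_sum_mul_add_of_eq_off {ι : Type*} [Fintype ι]
    {w a b : ι → ℝ} {i : ι} {c : ℝ} (hwi : 0 ≤ w i) (hwc : w i ≤ c) (hab : a i ≤ b i + 1)
    (heq : ∀ j, j ≠ i → a j = b j) :
    ∑ j, w j * a j ≤ ∑ j, w j * b j + c := by
  have hdiff : ∑ j, w j * a j - ∑ j, w j * b j = w i * (a i - b i) := by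
    rw [← Finset.sum_sub_distrib]
    refine (Fintype.sum_eq_single i fun j hj => ?_).trans (mul_sub _ _ _).symm
    rw [heq j hj, sub_self]
  have : w i * (a i - b i) ≤ w i * 1 := mul_le_mul_of_nonneg_left (by linarith) hwi
  linarith

section

variable {p n : ℕ} {α : ℝ}

theorem bddBelow_weightedErr (g : (Fin p → ℝ) → Bool) (ξ : Fin n → Bool × (Fin p → ℝ)) :
    BddBelow ((fun w => ∑ i, w i * (if g (ξ i).2 ≠ (ξ i).1 then (1 : ℝ) else 0)) ''
      weightSet n α) := by
  refine ⟨0, ?_⟩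
  rintro _ ⟨w, hw, rfl⟩
  exact Finset.sum_nonneg fun j _ => mul_nonneg (hw.1 j).1 (by split_ifs <;> norm_num)

theorem empTrimmedErr_le_add_of_eq_off (hα : α ≤ 1) (g : (Fin p → ℝ) → Bool) {i : Fin n}
    {ξ ξ' : Fin n → Bool × (Fin p → ℝ)} (hdiff : ∀ j, j ≠ i → ξ j = ξ' j) :
    empTrimmedErr n α ξ g ≤ empTrimmedErr n α ξ' g + 1 / (n * (1 - α)) := by
  have hc : (0 : ℝ) ≤ 1 / (n * (1 - α)) := by
    have : (0 : ℝ) ≤ 1 - α := by linarith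
    positivity
  refine Real.sInf_image_le_sInf_image_add hc (bddBelow_weightedErr g ξ) fun w hw => ?_
  refine Fintype.sum_mul_le_sum_mul_add_of_eq_off (hw.1 i).1 (hw.1 i).2 ?_
    fun j hj => by rw [hdiff j hj]
  split_ifs <;> norm_num

end

theorem empTrimmedErr_bounded_differences_general {p : ℕ}
    {g : (Fin p → ℝ) → Bool}
    {α : ℝ} (hα : α ∈ Set.Ioo (0 : ℝ) 1)
    {n : ℕ} (i : Fin n)
    (ξ ξ' : Fin n → Bool × (Fin p → ℝ))
    (hdiff : ∀ j, j ≠ i → ξ j = ξ' j) :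
    |empTrimmedErr n α ξ g - empTrimmedErr n α ξ' g| ≤ 1 / (n * (1 - α)) := by
  have hα1 : α ≤ 1 := hα.2.le
  refine abs_sub_le_iff.mpr ⟨?_, ?_⟩
  · linarith [empTrimmedErr_le_add_of_eq_off hα1 g hdiff]
  · linarith [empTrimmedErr_le_add_of_eq_off hα1 g fun j hj => (hdiff j hj).symm]

/-- Bounded differences property: changing one observation of the sample changes the
empirical trimmed classification error by at most `1/(n(1−α))`. -/
theorem empTrimmedErr_bounded_differences {p : ℕ}
    {g : (Fin p → ℝ) → Bool} (hg : Measurable g)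
    {α : ℝ} (hα : α ∈ Set.Ioo (0 : ℝ) 1)
    {n : ℕ} (hn : 0 < n) (i : Fin n)
    (ξ ξ' : Fin n → Bool × (Fin p → ℝ))
    (hdiff : ∀ j, j ≠ i → ξ j = ξ' j) :
    |empTrimmedErr n α ξ g - empTrimmedErr n α ξ' g| ≤ 1 / (n * (1 - α)) :=
  empTrimmedErr_bounded_differences_general hα i ξ ξ' hdiff

end
end

section
/- Let X be a real-valued random variable with finite variance, and let φ : ℝ → ℝ be convex, nondecreasing and 1-Lipschitz. Then E[φ(X)] − φ(E[X]) ≤ √(Var(X)/2). -/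
/-!
A monotone 1-Lipschitz `φ` satisfies `φ x - φ m ≤ (x - m)⁺ = (|x - m| + (x - m)) / 2`. Taking
`m = E[X]` and integrating, the linear term has mean zero, so the Jensen gap is at most
`E|X - E[X]| / 2 ≤ √Var(X) / 2 ≤ √(Var(X) / 2)` by Cauchy–Schwarz.
-/

open MeasureTheory ProbabilityTheory

theorem sub_le_half_abs_add_sub_of_monotone_of_lipschitzWith_one {φ : ℝ → ℝ}
    (hmono : Monotone φ) (hlip : LipschitzWith 1 φ) (x y : ℝ) :
    φ x - φ y ≤ (|x - y| + (x - y)) / 2 := by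
  rcases le_total y x with hyx | hxy
  · have hdist := hlip.dist_le_mul x y
    simp only [Real.dist_eq, NNReal.coe_one, one_mul] at hdist
    rw [abs_of_nonneg (sub_nonneg.2 hyx)] at hdist ⊢
    linarith [le_abs_self (φ x - φ y)]
  · rw [abs_of_nonpos (sub_nonpos.2 hxy)]
    linarith [hmono hxy]

theorem Real.sqrt_div_two_le_sqrt_div_two {v : ℝ} (hv : 0 ≤ v) : √v / 2 ≤ √(v / 2) := by
  rw [Real.le_sqrt (by positivity) (by positivity), div_pow, Real.sq_sqrt hv]
  linarith

section

variable {Ω : Type*} [MeasurableSpace Ω] {μ : Measure Ω}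

theorem LipschitzWith.integrable_comp {E F : Type*} [NormedAddCommGroup E]
    [NormedAddCommGroup F] [IsFiniteMeasure μ] {K : NNReal} {g : E → F} (hg : LipschitzWith K g)
    {f : Ω → E} (hf : Integrable f μ) : Integrable (fun ω ↦ g (f ω)) μ := by
  refine ((hf.norm.const_mul K).add (integrable_const ‖g 0‖)).mono'
    (hg.continuous.comp_aestronglyMeasurable hf.1) (ae_of_all _ fun ω ↦ ?_)
  have hdist := hg.norm_sub_le (f ω) 0
  rw [sub_zero] at hdist
  simp only [Pi.add_apply]
  linarith [norm_sub_norm_le (g (f ω)) (g 0)]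

theorem sq_integral_le_integral_sq [IsProbabilityMeasure μ] {f : Ω → ℝ} (hf : MemLp f 2 μ) :
    (∫ ω, f ω ∂μ) ^ 2 ≤ ∫ ω, f ω ^ 2 ∂μ := by
  have hvar := variance_nonneg f μ
  rw [variance_eq_sub hf] at hvar
  simpa [sub_nonneg] using hvar

theorem integral_abs_sub_integral_le_sqrt_variance [IsProbabilityMeasure μ] {X : Ω → ℝ}
    (hX : MemLp X 2 μ) : ∫ ω, |X ω - μ[X]| ∂μ ≤ √(variance X μ) := by
  have hY : MemLp (fun ω ↦ |X ω - μ[X]|) 2 μ := (hX.sub (memLp_const (∫ ω, X ω ∂μ))).abs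
  have hsq := sq_integral_le_integral_sq hY
  simp only [sq_abs] at hsq
  rw [variance_eq_integral hX.aemeasurable]
  exact Real.le_sqrt_of_sq_le hsq

theorem integral_comp_sub_comp_integral_le_half_integral_abs [IsProbabilityMeasure μ]
    {X : Ω → ℝ} (hX : Integrable X μ) {φ : ℝ → ℝ} (hmono : Monotone φ)
    (hlip : LipschitzWith 1 φ) :
    ∫ ω, φ (X ω) ∂μ - φ (∫ ω, X ω ∂μ) ≤ (∫ ω, |X ω - ∫ ω, X ω ∂μ| ∂μ) / 2 := by
  set m := ∫ ω, X ω ∂μ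
  have hY : Integrable (fun ω ↦ X ω - m) μ := hX.sub (integrable_const m)
  have hmean : ∫ ω, (X ω - m) ∂μ = 0 := by simp [integral_sub hX (integrable_const m), m]
  have hφX : Integrable (fun ω ↦ φ (X ω)) μ := hlip.integrable_comp hX
  calc ∫ ω, φ (X ω) ∂μ - φ m = ∫ ω, (φ (X ω) - φ m) ∂μ := by
        simp [integral_sub hφX (integrable_const (φ m))]
    _ ≤ ∫ ω, (|X ω - m| + (X ω - m)) / 2 ∂μ :=
        integral_mono (hφX.sub (integrable_const _)) ((hY.abs.add hY).div_const 2)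
          fun ω ↦ sub_le_half_abs_add_sub_of_monotone_of_lipschitzWith_one hmono hlip (X ω) m
    _ = (∫ ω, |X ω - m| ∂μ) / 2 := by rw [integral_div, integral_add hY.abs hY, hmean, add_zero]

end

theorem jensen_gap_le_sqrt_half_variance_general
    {Ω : Type*} [MeasurableSpace Ω] (μ : Measure Ω) [IsProbabilityMeasure μ]
    (X : Ω → ℝ) (hX : MemLp X 2 μ)
    (φ : ℝ → ℝ) (hmono : Monotone φ)
    (hlip : LipschitzWith 1 φ) :
    (∫ ω, φ (X ω) ∂μ) - φ (∫ ω, X ω ∂μ) ≤ Real.sqrt (variance X μ / 2) :=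
  calc (∫ ω, φ (X ω) ∂μ) - φ (∫ ω, X ω ∂μ) ≤ (∫ ω, |X ω - ∫ ω, X ω ∂μ| ∂μ) / 2 :=
        integral_comp_sub_comp_integral_le_half_integral_abs (hX.integrable one_le_two) hmono hlip
    _ ≤ √(variance X μ) / 2 := by gcongr; exact integral_abs_sub_integral_le_sqrt_variance hX
    _ ≤ √(variance X μ / 2) := Real.sqrt_div_two_le_sqrt_div_two (variance_nonneg X μ)

/-- For a real random variable `X` with finite variance and a convex, nondecreasing,
1-Lipschitz function `φ`, one has `E[φ(X)] − φ(E[X]) ≤ √(Var(X)/2)`. -/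
theorem jensen_gap_le_sqrt_half_variance
    {Ω : Type*} [MeasurableSpace Ω] (μ : Measure Ω) [IsProbabilityMeasure μ]
    (X : Ω → ℝ) (hX : MemLp X 2 μ)
    (φ : ℝ → ℝ) (hconv : ConvexOn ℝ Set.univ φ) (hmono : Monotone φ)
    (hlip : LipschitzWith 1 φ) :
    (∫ ω, φ (X ω) ∂μ) - φ (∫ ω, X ω ∂μ) ≤ Real.sqrt (variance X μ / 2) :=
  jensen_gap_le_sqrt_half_variance_general μ X hX φ hmono hlip
end
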